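/- Let $X \subset \Sigma^{\mathbb{Z}}$ be a subshift with property $(D)$. Then the set $E^-(X) = \{x^- \in X_{(-\infty,0]} : \Omega^+_\infty(x^-) \neq \emptyset\} \cap \bigcap_{i \le 0} \{x^- : x_i \in \omega_1^+(x_{(-\infty,i)})\}$ is residual in $X_{(-\infty,0]}$. -/

import Mathlib

open Set

/-- The shift map on bi-infinite sequences. -/
def shiftMap {A : Type*} (x : ℤ → A) : ℤ → A := fun i => x (i + 1)

/-- A subshift: a closed, shift-invariant subset of the full shift. -/
def IsSubshift {A : Type*} [TopologicalSpace A] (X : Set (ℤ → A)) : Prop :=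
  IsClosed X ∧ ∀ x, x ∈ X ↔ shiftMap x ∈ X

/-- `ω_n⁺(x⁻)` for the past `x⁻ = x_{(-∞,0]}` of a point `x`: the set of words `b` of
length `n` for which there is `k` such that every point `y ∈ X` carrying the word
`x_{(-k,0]}` (with arbitrary more remote past) admits a continuation `y' ∈ X` with the
same past `y'_{(-∞,0]} = y_{(-∞,0]}` and carrying `b` on `[1,n]`. -/
def omegaRay {A : Type*} (X : Set (ℤ → A)) (x : ℤ → A) (n : ℕ) : Set (Fin n → A) :=
  {b | ∃ k : ℕ, ∀ y ∈ X, (∀ j : ℤ, -(k : ℤ) < j → j ≤ 0 → y j = x j) →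
    ∃ y' ∈ X, (∀ i : ℤ, i ≤ 0 → y' i = y i) ∧ ∀ l : Fin n, y' ((l : ℤ) + 1) = b l}

/-- `Ω⁺∞(x⁻)`: the set of right-infinite sequences `u ∈ X_{[1,∞)}` all of whose
prefixes of length `n` lie in `ω_n⁺(x⁻)`. -/
def OmegaInf {A : Type*} (X : Set (ℤ → A)) (x : ℤ → A) : Set (ℕ → A) :=
  {u | (∃ z ∈ X, ∀ n : ℕ, z ((n : ℤ) + 1) = u n) ∧
    ∀ n : ℕ, (fun l : Fin n => u l) ∈ omegaRay X x n}

/-- Property (D). -/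
def PropertyD {A : Type*} (X : Set (ℤ → A)) : Prop :=
  ∀ x ∈ X, ∀ m : ℕ, ∃ (k : ℕ) (y : ℤ → A), y ∈ X ∧ m ≤ k ∧
    (∀ j : ℤ, -(m : ℤ) < j → j ≤ 0 → y j = x j) ∧
    (∀ z ∈ X, (∀ j : ℤ, -(k : ℤ) < j → j ≤ 0 → z j = y j) →
      ∃ z' ∈ X, (∀ i : ℤ, i ≤ 0 → z' i = z i) ∧ z' 1 = x 1)

/-- The space of left-infinite configurations `(-∞,0]`. -/
abbrev PastSpace (A : Type*) := {i : ℤ // i ≤ 0} → A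

/-- Restriction of a bi-infinite point to its past `(-∞,0]`. -/
def proj0 {A : Type*} (x : ℤ → A) : PastSpace A := fun j => x j.1

/-- `E⁻(X)`: the set of pasts `x⁻ ∈ X_{(-∞,0]}` with `Ω⁺∞(x⁻) ≠ ∅` and such that for
every `i ≤ 0`, `x_i ∈ ω₁⁺(x_{(-∞,i)})`.  (All conditions depend only on the past of
the representing point.) -/
def EMinus {A : Type*} (X : Set (ℤ → A)) : Set (PastSpace A) :=
  proj0 '' (X ∩ {x | (OmegaInf X x).Nonempty ∧ ∀ i : ℤ, i ≤ 0 →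
    ∃ k : ℕ, ∀ y ∈ X, (∀ j : ℤ, i - (k : ℤ) ≤ j → j < i → y j = x j) →
      ∃ y' ∈ X, (∀ j : ℤ, j < i → y' j = y j) ∧ y' i = x i})

/-!
The conditions cutting out `E⁻(X)` are countably many: `ω_n⁺(x⁻) ≠ ∅` for every `n` (equivalent
to `Ω⁺∞(x⁻) ≠ ∅` by compactness of `X`) and `x_i ∈ ω₁⁺(x_{(-∞,i)})` for every `i ≤ 0`. Each of
them is witnessed by a finite window of the past, so defines an open set, and each is dense:
iterating property (D) backwards from position `b + r` to `b` produces, next to any past, a past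
whose window before `b` forces any prescribed admissible block on `(b, b + r]`. Since
`X_{(-∞,0]}` is compact, the Baire category theorem applies.
-/

open Filter Topology

section

variable {A : Type*} {X : Set (ℤ → A)}

theorem IsSubshift.comp_add_mem_iff [TopologicalSpace A] (hX : IsSubshift X) (x : ℤ → A)
    (t : ℤ) : (fun j => x (j + t)) ∈ X ↔ x ∈ X := by
  induction t using Int.induction_on with
  | zero => simp
  | succ n ih =>
    have h : (fun j => x (j + (n + 1))) = shiftMap fun j => x (j + n) := by
      ext j; simp only [shiftMap]; ring_nf
    rw [h, ← hX.2, ih]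
  | pred n ih =>
    have h : (fun j => x (j + -n)) = shiftMap fun j => x (j + (-n - 1)) := by
      ext j; simp only [shiftMap]; ring_nf
    rw [← ih, h, ← hX.2]

theorem IsSubshift.comp_add_mem [TopologicalSpace A] (hX : IsSubshift X) {x : ℤ → A}
    (hx : x ∈ X) (t : ℤ) : (fun j => x (j + t)) ∈ X :=
  (hX.comp_add_mem_iff x t).2 hx

def Forces (X : Set (ℤ → A)) (y : ℤ → A) (a b c : ℤ) (x : ℤ → A) : Prop :=
  ∀ z ∈ X, (∀ j, a < j → j ≤ b → z j = y j) →
    ∃ z' ∈ X, (∀ j ≤ b, z' j = z j) ∧ ∀ j, b < j → j ≤ c → z' j = x j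

namespace Forces

theorem nil (X : Set (ℤ → A)) (y : ℤ → A) (a b : ℤ) (x : ℤ → A) : Forces X y a b b x :=
  fun z hz _ => ⟨z, hz, fun _ _ => rfl, fun _ h₁ h₂ => absurd h₂ (not_le.2 h₁)⟩

theorem mono {y y' x x' : ℤ → A} {a b c c' : ℤ} (h : Forces X y a b c x)
    (hy : ∀ j, a < j → j ≤ b → y' j = y j) (hc : c' ≤ c)
    (hx : ∀ j, b < j → j ≤ c' → x' j = x j) : Forces X y' a b c' x' := by
  intro z hz hzy
  obtain ⟨z', hz', hpast, hfut⟩ := h z hz fun j h₁ h₂ => (hzy j h₁ h₂).trans (hy j h₁ h₂)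
  exact ⟨z', hz', hpast, fun j h₁ h₂ => (hfut j h₁ (h₂.trans hc)).trans (hx j h₁ h₂).symm⟩

theorem of_shift [TopologicalSpace A] (hX : IsSubshift X) {y x y₀ x₀ : ℤ → A} {a b c : ℤ}
    (t : ℤ) (h : Forces X y₀ a b c x₀) (hy : ∀ j, y₀ j = y (j + t))
    (hx : ∀ j, x₀ j = x (j + t)) : Forces X y (a + t) (b + t) (c + t) x := by
  intro z hz hzy
  obtain ⟨z', hz', hpast, hfut⟩ := h (fun j => z (j + t)) (hX.comp_add_mem hz t)
    fun j h₁ h₂ => (hzy (j + t) (by omega) (by omega)).trans (hy j).symm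
  refine ⟨fun j => z' (j + -t), hX.comp_add_mem hz' (-t), fun j hj => ?_, fun j h₁ h₂ => ?_⟩
  · simpa using hpast (j + -t) (by omega)
  · simpa [hx] using hfut (j + -t) (by omega) (by omega)

theorem trans {y y' x : ℤ → A} {a a' b c d : ℤ} (h₁ : Forces X y a b c y')
    (h₂ : Forces X y' a' c d x) (hbc : b ≤ c) (ha : a ≤ a')
    (hy : ∀ j, a' < j → j ≤ b → y j = y' j) (hx : ∀ j, b < j → j ≤ c → x j = y' j) :
    Forces X y a b d x := by
  intro z hz hzy
  obtain ⟨z', hz', hpast', hfut'⟩ := h₁ z hz hzy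
  have hz'y' : ∀ j, a' < j → j ≤ c → z' j = y' j := by
    intro j h₁ h₂
    rcases le_or_gt j b with hj | hj
    · rw [hpast' j hj, hzy j (by omega) hj, hy j h₁ hj]
    · exact hfut' j hj h₂
  obtain ⟨z'', hz'', hpast'', hfut''⟩ := h₂ z' hz' hz'y'
  refine ⟨z'', hz'', fun j hj => (hpast'' j (by omega)).trans (hpast' j hj), fun j h₁ h₂ => ?_⟩
  rcases le_or_gt j c with hj | hj
  · rw [hpast'' j hj, hfut' j h₁ hj, hx j h₁ hj]
  · exact hfut'' j hj h₂

end Forces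

section PropertyD

variable [TopologicalSpace A]

theorem PropertyD.exists_forces (hX : IsSubshift X) (hD : PropertyD X) {x : ℤ → A}
    (hx : x ∈ X) (b : ℤ) (m : ℕ) :
    ∃ k : ℕ, m ≤ k ∧ ∃ y ∈ X, (∀ j, b - m < j → j ≤ b → y j = x j) ∧
      Forces X y (b - k) b (b + 1) x := by
  obtain ⟨k, y, hy, hmk, hyx, hforce⟩ := hD _ (hX.comp_add_mem hx b) m
  have hf : Forces X y (-k) 0 1 fun j => x (j + b) := fun z hz hzy => by
    obtain ⟨z', hz', hpast, hz'1⟩ := hforce z hz hzy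
    exact ⟨z', hz', hpast, fun j h₁ h₂ => by rwa [show j = 1 by omega]⟩
  refine ⟨k, hmk, fun j => y (j + -b), hX.comp_add_mem hy (-b), fun j h₁ h₂ => ?_, ?_⟩
  · simpa using hyx (j + -b) (by omega) (by omega)
  · have := hf.of_shift hX b (y := fun j => y (j + -b)) (fun j => by simp) fun _ => rfl
    rwa [neg_add_eq_sub, zero_add, add_comm 1 b] at this

theorem PropertyD.exists_forces_block (hX : IsSubshift X) (hD : PropertyD X) {x : ℤ → A}
    (hx : x ∈ X) (r : ℕ) (b : ℤ) (m : ℕ) :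
    ∃ k : ℕ, m ≤ k ∧ ∃ y ∈ X, (∀ j, b - m < j → j ≤ b → y j = x j) ∧
      Forces X y (b - k) b (b + r) x := by
  induction r generalizing b m with
  | zero => exact ⟨m, le_rfl, x, hx, fun _ _ _ => rfl, by simpa using Forces.nil X x _ b x⟩
  | succ r ih =>
    obtain ⟨k₁, hk₁, y₁, hy₁, hy₁x, hf₁⟩ := ih (b + 1) (m + 1)
    obtain ⟨k₂, hk₂, y₂, hy₂, hy₂y₁, hf₂⟩ := hD.exists_forces hX hy₁ b k₁
    refine ⟨k₂, by omega, y₂, hy₂, fun j h₁ h₂ => ?_, ?_⟩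
    · rw [hy₂y₁ j (by omega) h₂, hy₁x j (by push_cast; omega) (by omega)]
    · have hf := hf₂.trans hf₁ (by omega) (by omega) (fun j h₁ h₂ => hy₂y₁ j (by omega) h₂)
        fun j h₁ h₂ => (hy₁x j (by push_cast; omega) h₂).symm
      rwa [show b + 1 + (r : ℤ) = b + ((r + 1 : ℕ) : ℤ) by push_cast; ring] at hf

end PropertyD

theorem Forces.mem_omegaRay {y x : ℤ → A} {k n : ℕ} (h : Forces X y (-k) 0 n x) :
    (fun l : Fin n => x (l + 1)) ∈ omegaRay X y n := by
  refine ⟨k, fun z hz hzy => ?_⟩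
  obtain ⟨z', hz', hpast, hfut⟩ := h z hz hzy
  exact ⟨z', hz', hpast, fun l => hfut _ (by omega) (by have := l.isLt; omega)⟩

theorem omegaRay_window {x : ℤ → A} {n : ℕ} {w : Fin n → A} (hw : w ∈ omegaRay X x n) :
    ∃ k : ℕ, ∀ x' : ℤ → A, (∀ j, -(k : ℤ) < j → j ≤ 0 → x' j = x j) →
      w ∈ omegaRay X x' n := by
  obtain ⟨k, hk⟩ := hw
  exact ⟨k, fun x' hx' => ⟨k, fun y hy hyx' =>
    hk y hy fun j h₁ h₂ => (hyx' j h₁ h₂).trans (hx' j h₁ h₂)⟩⟩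

theorem omegaRay_congr {x x' : ℤ → A} (h : ∀ j ≤ 0, x' j = x j) (n : ℕ) :
    omegaRay X x' n = omegaRay X x n := by
  ext w
  constructor <;> intro hw <;> obtain ⟨k, hk⟩ := omegaRay_window hw
  · exact hk x fun j _ hj => (h j hj).symm
  · exact hk x' fun j _ hj => h j hj

theorem omegaRay_init {x : ℤ → A} {n : ℕ} {w : Fin (n + 1) → A}
    (hw : w ∈ omegaRay X x (n + 1)) : Fin.init w ∈ omegaRay X x n := by
  obtain ⟨k, hk⟩ := hw
  refine ⟨k, fun y hy hyx => ?_⟩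
  obtain ⟨y', hy', hpast, hword⟩ := hk y hy hyx
  exact ⟨y', hy', hpast, fun l => hword l.castSucc⟩

theorem exists_mem_of_mem_omegaRay {x : ℤ → A} (hx : x ∈ X) {n : ℕ} {w : Fin n → A}
    (hw : w ∈ omegaRay X x n) : ∃ y ∈ X, (fun l : Fin n => y (l + 1)) = w := by
  obtain ⟨k, hk⟩ := hw
  obtain ⟨y, hy, -, hword⟩ := hk x hx fun _ _ _ => rfl
  exact ⟨y, hy, funext hword⟩

theorem omegaInf_congr {x x' : ℤ → A} (h : ∀ j ≤ 0, x' j = x j) :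
    OmegaInf X x' = OmegaInf X x := by
  simp only [OmegaInf, omegaRay_congr h]

theorem omegaInf_nonempty_iff [Finite A] [TopologicalSpace A] [DiscreteTopology A]
    (hXc : IsClosed X) {x : ℤ → A} (hx : x ∈ X) :
    (OmegaInf X x).Nonempty ↔ ∀ n, (omegaRay X x n).Nonempty := by
  refine ⟨fun ⟨u, hu⟩ n => ⟨_, hu.2 n⟩, fun h => ?_⟩
  let H : ℕ → Set (ℤ → A) := fun n => X ∩ (fun z (l : Fin n) => z (l + 1)) ⁻¹' omegaRay X x n
  have hH : ∀ n, IsClosed (H n) := fun n =>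
    hXc.inter ((isClosed_discrete _).preimage (continuous_pi fun _ => continuous_apply _))
  have hne : ∀ n, (H n).Nonempty := fun n => by
    obtain ⟨w, hw⟩ := h n
    obtain ⟨y, hy, rfl⟩ := exists_mem_of_mem_omegaRay hx hw
    exact ⟨y, hy, hw⟩
  obtain ⟨z, hz⟩ := IsCompact.nonempty_iInter_of_sequence_nonempty_isCompact_isClosed H
    (fun _ _ hz => ⟨hz.1, omegaRay_init hz.2⟩) hne (hH 0).isCompact hH
  rw [mem_iInter] at hz
  exact ⟨fun n => z (n + 1), ⟨z, (hz 0).1, fun _ => rfl⟩, fun n => (hz n).2⟩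

-- `x_i ∈ ω₁⁺(x_{(-∞,i)})`, as in the definition of `EMinus`
def SymbolForced (X : Set (ℤ → A)) (x : ℤ → A) (i : ℤ) : Prop :=
  ∃ k : ℕ, ∀ y ∈ X, (∀ j : ℤ, i - (k : ℤ) ≤ j → j < i → y j = x j) →
    ∃ y' ∈ X, (∀ j : ℤ, j < i → y' j = y j) ∧ y' i = x i

theorem Forces.symbolForced {x : ℤ → A} {i : ℤ} {k : ℕ}
    (h : Forces X x (i - 1 - k) (i - 1) i x) : SymbolForced X x i := by
  refine ⟨k, fun z hz hzx => ?_⟩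
  obtain ⟨z', hz', hpast, hfut⟩ := h z hz fun j h₁ h₂ => hzx j (by omega) (by omega)
  exact ⟨z', hz', fun j hj => hpast j (by omega), hfut i (by omega) le_rfl⟩

theorem SymbolForced.window {x : ℤ → A} {i : ℤ} (h : SymbolForced X x i) :
    ∃ k : ℕ, ∀ x' : ℤ → A, (∀ j, i - (k : ℤ) ≤ j → j ≤ i → x' j = x j) →
      SymbolForced X x' i := by
  obtain ⟨k, hk⟩ := h
  refine ⟨k, fun x' hx' => ⟨k, fun y hy hyx' => ?_⟩⟩
  obtain ⟨y', hy', hpast, hyi⟩ :=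
    hk y hy fun j h₁ h₂ => (hyx' j h₁ h₂).trans (hx' j h₁ h₂.le)
  exact ⟨y', hy', hpast, hyi.trans (hx' i (by omega) le_rfl).symm⟩

theorem symbolForced_congr {x x' : ℤ → A} {i : ℤ} (hi : i ≤ 0) (h : ∀ j ≤ 0, x' j = x j) :
    SymbolForced X x' i ↔ SymbolForced X x i := by
  constructor <;> intro hx <;> obtain ⟨k, hk⟩ := hx.window
  · exact hk x fun j _ hj => (h j (hj.trans hi)).symm
  · exact hk x' fun j _ hj => h j (hj.trans hi)

theorem mem_EMinus_proj0_iff {x : ℤ → A} (hx : x ∈ X) :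
    proj0 x ∈ EMinus X ↔ (OmegaInf X x).Nonempty ∧ ∀ i ≤ 0, SymbolForced X x i := by
  refine ⟨?_, fun h => ⟨x, ⟨hx, h⟩, rfl⟩⟩
  rintro ⟨x', ⟨-, hΩ, hforced⟩, hx'⟩
  have h : ∀ j ≤ 0, x' j = x j := fun j hj => congrFun hx' ⟨j, hj⟩
  exact ⟨omegaInf_congr h ▸ hΩ, fun i hi => (symbolForced_congr hi h).1 (hforced i hi)⟩

-- Only the coordinates `≤ 0` of this extension are ever read.
def pastExtend (p : PastSpace A) : ℤ → A := fun j => p ⟨min j 0, min_le_right j 0⟩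

theorem pastExtend_of_le (p : PastSpace A) {j : ℤ} (hj : j ≤ 0) :
    pastExtend p j = p ⟨j, hj⟩ := by
  simp only [pastExtend, min_eq_left hj]

theorem pastExtend_proj0 (x : ℤ → A) {j : ℤ} (hj : j ≤ 0) : pastExtend (proj0 x) j = x j :=
  pastExtend_of_le _ hj

def pastCylinder (p : PastSpace A) (m : ℕ) : Set (PastSpace A) :=
  {q | ∀ j : {i : ℤ // i ≤ 0}, -(m : ℤ) < j → q j = p j}

theorem pastExtend_eq_of_mem_pastCylinder {p q : PastSpace A} {m : ℕ}
    (hq : q ∈ pastCylinder p m) {j : ℤ} (h₁ : -(m : ℤ) < j) (h₂ : j ≤ 0) :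
    pastExtend q j = pastExtend p j := by
  rw [pastExtend_of_le q h₂, pastExtend_of_le p h₂]
  exact hq _ h₁

section Topology

variable [TopologicalSpace A] [DiscreteTopology A]

theorem hasBasis_nhds_pastCylinder (p : PastSpace A) :
    (𝓝 p).HasBasis (fun _ => True) (pastCylinder p) := by
  refine ⟨fun t => ⟨fun ht => ?_, fun ⟨m, _, hm⟩ => mem_of_superset ?_ hm⟩⟩
  · rw [nhds_pi, Filter.mem_pi] at ht
    obtain ⟨I, hI, s, hs, hIs⟩ := ht
    obtain ⟨c, hc⟩ := (hI.image Subtype.val).bddBelow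
    refine ⟨(-c).toNat + 1, trivial, fun q hq => hIs fun j hj => ?_⟩
    have := hc (mem_image_of_mem _ hj)
    rw [hq j (by omega)]
    exact mem_of_mem_nhds (hs j)
  · have hfin : {j : {i : ℤ // i ≤ 0} | -(m : ℤ) < j}.Finite :=
      ((finite_Ioc (-(m : ℤ)) 0).preimage Subtype.val_injective.injOn).subset
        fun j hj => ⟨hj, j.2⟩
    exact (isOpen_set_pi (s := fun j => {p j}) hfin fun _ _ => isOpen_discrete _).mem_nhds
      fun _ _ => rfl

theorem isOpen_of_pastCylinder_subset {S : Set (PastSpace A)}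
    (h : ∀ p ∈ S, ∃ m, pastCylinder p m ⊆ S) : IsOpen S :=
  isOpen_iff_mem_nhds.2 fun p hp => (hasBasis_nhds_pastCylinder p).mem_iff.2 (by simpa using h p hp)

theorem dense_preimage_of_forall_exists_eqOn {S : Set (PastSpace A)}
    (h : ∀ x ∈ X, ∀ m : ℕ, ∃ y ∈ X, (∀ j, -(m : ℤ) < j → j ≤ 0 → y j = x j) ∧ proj0 y ∈ S) :
    Dense (Subtype.val ⁻¹' S : Set (proj0 '' X)) := by
  rw [Subtype.dense_iff]
  rintro _ ⟨x, hx, rfl⟩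
  rw [mem_closure_iff_nhds_basis (hasBasis_nhds_pastCylinder _)]
  intro m _
  obtain ⟨y, hy, hyx, hyS⟩ := h x hx m
  exact ⟨proj0 y, ⟨⟨_, y, hy, rfl⟩, hyS, rfl⟩, fun j hj => hyx j hj j.2⟩

theorem isOpen_setOf_omegaRay_nonempty (X : Set (ℤ → A)) (n : ℕ) :
    IsOpen {p : PastSpace A | (omegaRay X (pastExtend p) n).Nonempty} := by
  refine isOpen_of_pastCylinder_subset fun p ⟨w, hw⟩ => ?_
  obtain ⟨k, hk⟩ := omegaRay_window hw
  exact ⟨k, fun q hq => ⟨w, hk _ fun j h₁ h₂ => pastExtend_eq_of_mem_pastCylinder hq h₁ h₂⟩⟩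

theorem isOpen_setOf_symbolForced (X : Set (ℤ → A)) {i : ℤ} (hi : i ≤ 0) :
    IsOpen {p : PastSpace A | SymbolForced X (pastExtend p) i} := by
  refine isOpen_of_pastCylinder_subset fun p hp => ?_
  obtain ⟨k, hk⟩ := SymbolForced.window hp
  exact ⟨k + (-i).toNat + 1, fun q hq =>
    hk _ fun j h₁ h₂ => pastExtend_eq_of_mem_pastCylinder hq (by omega) (h₂.trans hi)⟩

theorem dense_setOf_omegaRay_nonempty (hX : IsSubshift X) (hD : PropertyD X) (n : ℕ) :
    Dense (Subtype.val ⁻¹' {p | (omegaRay X (pastExtend p) n).Nonempty} :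
      Set (proj0 '' X)) := by
  refine dense_preimage_of_forall_exists_eqOn fun x hx m => ?_
  obtain ⟨k, -, y, hy, hyx, hf⟩ := hD.exists_forces_block hX hx n 0 m
  refine ⟨y, hy, by simpa using hyx, ?_⟩
  rw [mem_ofPred_eq, omegaRay_congr (fun j hj => pastExtend_proj0 y hj)]
  exact ⟨_, Forces.mem_omegaRay (by simpa using hf)⟩

theorem dense_setOf_symbolForced (hX : IsSubshift X) (hD : PropertyD X) {i : ℤ} (hi : i ≤ 0) :
    Dense (Subtype.val ⁻¹' {p | SymbolForced X (pastExtend p) i} : Set (proj0 '' X)) := by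
  refine dense_preimage_of_forall_exists_eqOn fun x hx m => ?_
  obtain ⟨k, -, y, hy, hyx, hf⟩ := hD.exists_forces_block hX hx (1 - i).toNat (i - 1) m
  -- `w` continues the past `y_{(-∞,i)}` by the block `x_{[i,0]}`
  obtain ⟨w, hw, hwy, hwx⟩ := hf y hy fun _ _ _ => rfl
  have hwx' : ∀ j, i - 1 < j → j ≤ 0 → w j = x j := fun j h₁ h₂ => hwx j h₁ (by omega)
  refine ⟨w, hw, fun j h₁ h₂ => ?_, ?_⟩
  · rcases le_or_gt j (i - 1) with hj | hj
    · rw [hwy j hj, hyx j (by omega) hj]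
    · exact hwx' j hj h₂
  · rw [mem_ofPred_eq, symbolForced_congr hi (fun j hj => pastExtend_proj0 w hj)]
    refine Forces.symbolForced (k := k) (hf.mono (fun j _ h₂ => hwy j h₂) (by omega) ?_)
    exact fun j h₁ h₂ => hwx' j h₁ (h₂.trans hi)

end Topology

theorem preimage_val_EMinus [Finite A] [TopologicalSpace A] [DiscreteTopology A]
    (hXc : IsClosed X) :
    (Subtype.val ⁻¹' EMinus X : Set (proj0 '' X)) =
      (⋂ n : ℕ, Subtype.val ⁻¹' {p | (omegaRay X (pastExtend p) n).Nonempty}) ∩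
        ⋂ i : {i : ℤ // i ≤ 0}, Subtype.val ⁻¹' {p | SymbolForced X (pastExtend p) i} := by
  ext ⟨_, x, hx, rfl⟩
  have h : ∀ j ≤ 0, pastExtend (proj0 x) j = x j := fun j hj => pastExtend_proj0 x hj
  simp only [mem_preimage, mem_inter_iff, mem_iInter, mem_ofPred_eq, omegaRay_congr h,
    mem_EMinus_proj0_iff hx, omegaInf_nonempty_iff hXc hx, Subtype.forall]
  exact and_congr_right' (forall₂_congr fun i hi => (symbolForced_congr hi h).symm)

end

/-- For a property (D) subshift, `E⁻(X)` is residual (a dense Gδ) in `X_{(-∞,0]}`. -/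
theorem EMinus_residual {A : Type*} [Fintype A] [TopologicalSpace A] [DiscreteTopology A]
    (X : Set (ℤ → A)) (hX : IsSubshift X) (hD : PropertyD X) :
    Dense (Subtype.val ⁻¹' EMinus X : Set ↥(proj0 '' X)) ∧
      IsGδ (Subtype.val ⁻¹' EMinus X : Set ↥(proj0 '' X)) := by
  have : CompactSpace (proj0 '' X) := isCompact_iff_compactSpace.mp
    (hX.1.isCompact.image (continuous_pi fun j => continuous_apply j.1))
  have hopen₁ (n : ℕ) := (isOpen_setOf_omegaRay_nonempty X n).preimage
    (continuous_subtype_val (p := (· ∈ proj0 '' X)))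
  have hopen₂ (i : {i : ℤ // i ≤ 0}) := (isOpen_setOf_symbolForced X i.2).preimage
    (continuous_subtype_val (p := (· ∈ proj0 '' X)))
  rw [preimage_val_EMinus hX.1]
  exact ⟨Dense.inter_of_Gδ (.iInter_of_isOpen hopen₁) (.iInter_of_isOpen hopen₂)
      (dense_iInter_of_isOpen hopen₁ (dense_setOf_omegaRay_nonempty hX hD))
      (dense_iInter_of_isOpen hopen₂ fun i => dense_setOf_symbolForced hX hD i.2),
    (IsGδ.iInter_of_isOpen hopen₁).inter (.iInter_of_isOpen hopen₂)⟩
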